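/- arXiv:2601.04003 — 3 statements merged into one kernel-verified Lean document; each statement's English description precedes it below -/
import Mathlib

section
/- Let n ≥ 1, let a, b ∈ ℝⁿ with aᵢ < bᵢ for every i, let f : ℝⁿ → ℝ be continuous, and let μ > 0. Then the barrier function B(x; μ) := f(x) − μ ∑_{i=1}^{n} (log(xᵢ − aᵢ) + log(bᵢ − xᵢ)) attains its global minimum over the open box {x ∈ ℝⁿ : aᵢ < xᵢ < bᵢ}; i.e., there exists x* with a < x* < b componentwise such that B(x*; μ) ≤ B(x; μ) for all x in the open box. -/
/-!
On the closed box `[a, b]` put `p x = ∏ i, (x i - a i) * (b i - x i)`: it is continuous, and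
the open box is exactly where `p > 0`, on which the barrier equals `f - μ log p`. Since `f` is
bounded below on the compact closed box and `-μ log p → +∞` as `p → 0`, the barrier exceeds its
value at the centre wherever `p < ε` for a small `ε > 0`; so its minimum over the compact set
`{x ∈ [a, b] | ε ≤ p x}` is a minimum over the whole open box.
-/

open Real Set Finset

theorem IsCompact.exists_isMinOn_of_le_outside {X α : Type*} [TopologicalSpace X] [LinearOrder α]
    [TopologicalSpace α] [ClosedIicTopology α] {f : X → α} {K U : Set X} (hK : IsCompact K)
    (hf : ContinuousOn f K) {x₀ : X} (hx₀ : x₀ ∈ K)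
    (hout : ∀ x ∈ U \ K, f x₀ ≤ f x) : ∃ x ∈ K, IsMinOn f U x := by
  obtain ⟨x, hxK, hmin⟩ := hK.exists_isMinOn ⟨x₀, hx₀⟩ hf
  refine ⟨x, hxK, fun y hyU => ?_⟩
  by_cases hyK : y ∈ K
  · exact hmin hyK
  · exact (hmin hx₀).trans (hout y ⟨hyU, hyK⟩)

theorem IsCompact.exists_isMinOn_sub_mul_log {X : Type*} [TopologicalSpace X] {C : Set X}
    (hC : IsCompact C) {f p : X → ℝ} (hf : ContinuousOn f C) (hp : Continuous p) {μ : ℝ}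
    (hμ : 0 < μ) {x₀ : X} (hx₀ : x₀ ∈ C) (hpx₀ : 0 < p x₀) :
    ∃ x ∈ {y ∈ C | 0 < p y}, IsMinOn (fun y => f y - μ * log (p y)) {y ∈ C | 0 < p y} x := by
  set g := fun y => f y - μ * log (p y)
  obtain ⟨m, hmC, hm⟩ := hC.exists_isMinOn ⟨x₀, hx₀⟩ hf
  set ε := min (p x₀) (exp ((f m - g x₀) / μ))
  have hε : 0 < ε := lt_min hpx₀ (exp_pos _)
  set K := C ∩ {y | ε ≤ p y}
  have hKU : K ⊆ {y ∈ C | 0 < p y} := fun y hy => ⟨hy.1, hε.trans_le hy.2⟩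
  have hgK : ContinuousOn g K :=
    (hf.mono inter_subset_left).sub <| continuousOn_const.mul <|
      hp.continuousOn.log fun y hy => (hε.trans_le hy.2).ne'
  have hout : ∀ y ∈ {y ∈ C | 0 < p y} \ K, g x₀ ≤ g y := by
    rintro y ⟨⟨hyC, hpy⟩, hyK⟩
    have hlog : log (p y) < (f m - g x₀) / μ :=
      calc log (p y) < log ε := log_lt_log hpy (not_le.mp fun h => hyK ⟨hyC, h⟩)
        _ ≤ log (exp ((f m - g x₀) / μ)) := log_le_log hε (min_le_right _ _)
        _ = (f m - g x₀) / μ := log_exp _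
    have hfy : f m ≤ f y := hm hyC
    have hμlog := (lt_div_iff₀' hμ).mp hlog
    simp only [g]
    linarith
  have hK : IsCompact K := hC.inter_right (isClosed_le continuous_const hp)
  obtain ⟨x, hxK, hx⟩ := hK.exists_isMinOn_of_le_outside hgK ⟨hx₀, min_le_left (p x₀) _⟩ hout
  exact ⟨x, hKU hxK, hx⟩

theorem mem_Icc_and_prod_pos_iff {ι : Type*} [Fintype ι] {a b x : ι → ℝ} :
    x ∈ Icc a b ∧ 0 < ∏ i, (x i - a i) * (b i - x i) ↔ ∀ i, a i < x i ∧ x i < b i := by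
  constructor
  · rintro ⟨⟨hax, hxb⟩, hpos⟩ i
    obtain ⟨hxa, hbx⟩ := mul_ne_zero_iff.mp ((prod_ne_zero_iff.mp hpos.ne') i (mem_univ i))
    exact ⟨(hax i).lt_of_ne (sub_ne_zero.mp hxa).symm, (hxb i).lt_of_ne (sub_ne_zero.mp hbx).symm⟩
  · intro h
    refine ⟨⟨fun i => (h i).1.le, fun i => (h i).2.le⟩, prod_pos fun i _ => ?_⟩
    exact mul_pos (sub_pos.mpr (h i).1) (sub_pos.mpr (h i).2)

theorem log_prod_sub_mul_sub {ι : Type*} [Fintype ι] {a b x : ι → ℝ}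
    (h : ∀ i, a i < x i ∧ x i < b i) :
    log (∏ i, (x i - a i) * (b i - x i)) = ∑ i, (log (x i - a i) + log (b i - x i)) := by
  rw [log_prod fun i _ => (mul_pos (sub_pos.mpr (h i).1) (sub_pos.mpr (h i).2)).ne']
  exact sum_congr rfl fun i _ => log_mul (sub_pos.mpr (h i).1).ne' (sub_pos.mpr (h i).2).ne'

theorem barrier_function_attains_min_on_open_box_general
    (n : ℕ) (a b : Fin n → ℝ) (hab : ∀ i, a i < b i)
    (f : (Fin n → ℝ) → ℝ) (hf : Continuous f) (μ : ℝ) (hμ : 0 < μ) :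
    ∃ xstar : Fin n → ℝ, (∀ i, a i < xstar i ∧ xstar i < b i) ∧
      ∀ x : Fin n → ℝ, (∀ i, a i < x i ∧ x i < b i) →
        f xstar - μ * ∑ i, (Real.log (xstar i - a i) + Real.log (b i - xstar i)) ≤
          f x - μ * ∑ i, (Real.log (x i - a i) + Real.log (b i - x i)) := by
  have hp : Continuous fun x : Fin n → ℝ => ∏ i, (x i - a i) * (b i - x i) := by fun_prop
  have hmid : ∀ i, a i < (a i + b i) / 2 ∧ (a i + b i) / 2 < b i := fun i =>
    ⟨by linarith [hab i], by linarith [hab i]⟩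
  obtain ⟨xstar, hxstar, hmin⟩ := isCompact_Icc.exists_isMinOn_sub_mul_log hf.continuousOn hp hμ
    (mem_Icc_and_prod_pos_iff.mpr hmid).1 (mem_Icc_and_prod_pos_iff.mpr hmid).2
  have hxstar' := mem_Icc_and_prod_pos_iff.mp hxstar
  refine ⟨xstar, hxstar', fun x hx => ?_⟩
  have := isMinOn_iff.mp hmin x (mem_Icc_and_prod_pos_iff.mpr hx)
  rwa [log_prod_sub_mul_sub hxstar', log_prod_sub_mul_sub hx] at this

/-- For a continuous objective `f` and `μ > 0`, the logarithmic barrier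
function `B(x;μ) = f(x) - μ ∑ i (log (xᵢ - aᵢ) + log (bᵢ - xᵢ))` attains its global
minimum over the open box `{x : aᵢ < xᵢ < bᵢ}`. -/
theorem barrier_function_attains_min_on_open_box
    (n : ℕ) (hn : 1 ≤ n) (a b : Fin n → ℝ) (hab : ∀ i, a i < b i)
    (f : (Fin n → ℝ) → ℝ) (hf : Continuous f) (μ : ℝ) (hμ : 0 < μ) :
    ∃ xstar : Fin n → ℝ, (∀ i, a i < xstar i ∧ xstar i < b i) ∧
      ∀ x : Fin n → ℝ, (∀ i, a i < x i ∧ x i < b i) →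
        f xstar - μ * ∑ i, (Real.log (xstar i - a i) + Real.log (b i - xstar i)) ≤
          f x - μ * ∑ i, (Real.log (x i - a i) + Real.log (b i - x i)) :=
  barrier_function_attains_min_on_open_box_general n a b hab f hf μ hμ
end

section
/- Let n ≥ 1, let a, b ∈ ℝⁿ with aᵢ < bᵢ for every i, and let f : ℝⁿ → ℝ be continuous. Let (μ_k) be a sequence of positive reals with μ_k → 0, and for each k let x_k be a global minimizer over the open box {x : aᵢ < xᵢ < bᵢ} of the barrier function B(x; μ_k) := f(x) − μ_k ∑_{i=1}^{n} (log(xᵢ − aᵢ) + log(bᵢ − xᵢ)). If x_k converges to some x̄, then x̄ ∈ [a,b] and f(x̄) = min_{x ∈ [a,b]} f(x); i.e., x̄ is a global minimizer of f over the closed box. -/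
/-!
Penalising by `-μ φ` with `φ` bounded above by `C` on the feasible set `s` costs at
most `μ (C - φ y)` at any fixed feasible `y`, so `f (x k) ≤ f y + μ k (C - φ y)`; letting
`μ k → 0` gives `f x̄ ≤ f y` on `s`, and continuity extends this to `closure s`. For the logarithmic
barrier of a box, `s` is the open box, whose closure is the closed box.
-/

open Filter Topology Set

section BarrierPrinciple

variable {ι X : Type*} [TopologicalSpace X] {l : Filter ι} {f φ : X → ℝ} {s : Set X}
  {C : ℝ} {μ : ι → ℝ} {x : ι → X} {xbar : X}

theorem le_of_isMinOn_sub_mul_of_tendsto [l.NeBot] (hf : ContinuousOn f (closure s))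
    (hφ : ∀ y ∈ s, φ y ≤ C) (hμ0 : ∀ k, 0 ≤ μ k) (hμ : Tendsto μ l (𝓝 0))
    (hxs : ∀ k, x k ∈ s) (hxmin : ∀ k, IsMinOn (fun y => f y - μ k * φ y) s (x k))
    (hlim : Tendsto x l (𝓝 xbar)) {y : X} (hy : y ∈ s) : f xbar ≤ f y := by
  have hmem : xbar ∈ closure s := mem_closure_of_tendsto hlim (Eventually.of_forall hxs)
  have hfx : Tendsto (fun k => f (x k)) l (𝓝 (f xbar)) :=
    (hf xbar hmem).tendsto.comp <| tendsto_nhdsWithin_iff.2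
      ⟨hlim, Eventually.of_forall fun k => subset_closure (hxs k)⟩
  have hbound : Tendsto (fun k => f y + μ k * (C - φ y)) l (𝓝 (f y)) := by
    simpa using (hμ.mul_const (C - φ y)).const_add (f y)
  refine le_of_tendsto_of_tendsto' hfx hbound fun k => ?_
  have hmin : f (x k) - μ k * φ (x k) ≤ f y - μ k * φ y := hxmin k hy
  nlinarith [mul_le_mul_of_nonneg_left (hφ (x k) (hxs k)) (hμ0 k)]

theorem isMinOn_closure_of_isMinOn_sub_mul_of_tendsto [l.NeBot] (hf : ContinuousOn f (closure s))
    (hφ : ∀ y ∈ s, φ y ≤ C) (hμ0 : ∀ k, 0 ≤ μ k) (hμ : Tendsto μ l (𝓝 0))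
    (hxs : ∀ k, x k ∈ s) (hxmin : ∀ k, IsMinOn (fun y => f y - μ k * φ y) s (x k))
    (hlim : Tendsto x l (𝓝 xbar)) : xbar ∈ closure s ∧ IsMinOn f (closure s) xbar := by
  refine ⟨mem_closure_of_tendsto hlim (Eventually.of_forall hxs), fun y hy => ?_⟩
  exact ContinuousWithinAt.closure_le hy continuousWithinAt_const
    ((hf y hy).mono subset_closure)
    fun z hz => le_of_isMinOn_sub_mul_of_tendsto hf hφ hμ0 hμ hxs hxmin hlim hz

end BarrierPrinciple

theorem Real.log_sub_add_log_sub_le {a b t : ℝ} (ha : a < t) (hb : t < b) :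
    Real.log (t - a) + Real.log (b - t) ≤ 2 * Real.log (b - a) := by
  have h₁ : Real.log (t - a) ≤ Real.log (b - a) := Real.log_le_log (by linarith) (by linarith)
  have h₂ : Real.log (b - t) ≤ Real.log (b - a) := Real.log_le_log (by linarith) (by linarith)
  linarith

theorem closure_pi_Ioo {ι α : Type*} [TopologicalSpace α] [LinearOrder α] [OrderTopology α]
    [DenselyOrdered α] {a b : ι → α} (hab : ∀ i, a i ≠ b i) :
    closure (univ.pi fun i => Ioo (a i) (b i)) = univ.pi fun i => Icc (a i) (b i) := by
  simp only [closure_pi_set, closure_Ioo (hab _)]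

theorem barrier_minimizers_converge_to_constrained_minimizer_general
    (n : ℕ) (a b : Fin n → ℝ)
    (f : (Fin n → ℝ) → ℝ) (hf : Continuous f)
    (μ : ℕ → ℝ) (hμpos : ∀ k, 0 < μ k)
    (hμ : Filter.Tendsto μ Filter.atTop (nhds 0))
    (x : ℕ → Fin n → ℝ)
    (hxfeas : ∀ k, ∀ i, a i < x k i ∧ x k i < b i)
    (hxmin : ∀ k, ∀ y : Fin n → ℝ, (∀ i, a i < y i ∧ y i < b i) →
      f (x k) - μ k * ∑ i, (Real.log (x k i - a i) + Real.log (b i - x k i)) ≤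
        f y - μ k * ∑ i, (Real.log (y i - a i) + Real.log (b i - y i)))
    (xbar : Fin n → ℝ)
    (hlim : Filter.Tendsto x Filter.atTop (nhds xbar)) :
    (∀ i, a i ≤ xbar i ∧ xbar i ≤ b i) ∧
    (∀ y : Fin n → ℝ, (∀ i, a i ≤ y i ∧ y i ≤ b i) → f xbar ≤ f y) := by
  have hab : ∀ i, a i ≠ b i := fun i => ((hxfeas 0 i).1.trans (hxfeas 0 i).2).ne
  have hφ : ∀ y ∈ univ.pi fun i => Ioo (a i) (b i),
      ∑ i, (Real.log (y i - a i) + Real.log (b i - y i)) ≤ ∑ i, 2 * Real.log (b i - a i) :=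
    fun y hy => Finset.sum_le_sum fun i _ =>
      Real.log_sub_add_log_sub_le (hy i trivial).1 (hy i trivial).2
  obtain ⟨hxbar, hmin⟩ := isMinOn_closure_of_isMinOn_sub_mul_of_tendsto hf.continuousOn hφ
    (fun k => (hμpos k).le) hμ (fun k i _ => hxfeas k i)
    (fun k y hy => hxmin k y fun i => hy i trivial) hlim
  rw [closure_pi_Ioo hab] at hxbar hmin
  exact ⟨fun i => hxbar i trivial, fun y hy => hmin fun i _ => hy i⟩

/-- If `μ_k → 0`, `x_k` is a global minimizer of the barrier function
`B(·;μ_k)` over the open box, and `x_k → x̄`, then `x̄` lies in the closed box `[a,b]`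
and is a global minimizer of `f` over `[a,b]`. -/
theorem barrier_minimizers_converge_to_constrained_minimizer
    (n : ℕ) (hn : 1 ≤ n) (a b : Fin n → ℝ) (hab : ∀ i, a i < b i)
    (f : (Fin n → ℝ) → ℝ) (hf : Continuous f)
    (μ : ℕ → ℝ) (hμpos : ∀ k, 0 < μ k)
    (hμ : Filter.Tendsto μ Filter.atTop (nhds 0))
    (x : ℕ → Fin n → ℝ)
    (hxfeas : ∀ k, ∀ i, a i < x k i ∧ x k i < b i)
    (hxmin : ∀ k, ∀ y : Fin n → ℝ, (∀ i, a i < y i ∧ y i < b i) →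
      f (x k) - μ k * ∑ i, (Real.log (x k i - a i) + Real.log (b i - x k i)) ≤
        f y - μ k * ∑ i, (Real.log (y i - a i) + Real.log (b i - y i)))
    (xbar : Fin n → ℝ)
    (hlim : Filter.Tendsto x Filter.atTop (nhds xbar)) :
    (∀ i, a i ≤ xbar i ∧ xbar i ≤ b i) ∧
    (∀ y : Fin n → ℝ, (∀ i, a i ≤ y i ∧ y i ≤ b i) → f xbar ≤ f y) :=
  barrier_minimizers_converge_to_constrained_minimizer_general n a b f hf μ hμpos hμ x hxfeas hxmin
    xbar hlim
end

section
/- Let n ≥ 1 and let H : ℝⁿ × ℝ → ℝⁿ be continuously differentiable. Assume: (i) H(x₀, 0) = 0 for some x₀ ∈ ℝⁿ; (ii) for every (x, t) ∈ ℝⁿ × [0,1] with H(x, t) = 0, the partial Jacobian H_x(x, t) ∈ ℝ^{n×n} is invertible; (iii) there is a compact set K ⊆ ℝⁿ such that every (x, t) ∈ ℝⁿ × [0,1] with H(x, t) = 0 satisfies x ∈ K. Then there exists a continuous map x : [0,1] → ℝⁿ, continuously differentiable on (0,1), with x(0) = x₀ and H(x(t), t) = 0 for all t ∈ [0,1]. In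 particular, x* := x(1) satisfies H(x*, 1) = 0, so the homotopy method starting from x₀ reaches a zero of F := H(·, 1). -/
/-!
At a regular zero of `H`, the inverse function theorem applied to `(x, t) ↦ (H (x, t), t)` yields
a continuous branch of zeros `t ↦ (φ t, t)` containing every zero in a small box around the given
one. The zeros with `t ∈ [0, 1]` form a compact set, so by the Lebesgue number lemma these boxes
can be taken of one uniform size `δ`. Hence every zero curve on `[0, T]` continues, along the
branch through its endpoint, to `[0, T + δ / 2]`, and finitely many steps reach `t = 1`. The curve
is `C¹` on `(0, 1)` because near each of its points it coincides with a branch, which is `C¹`.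
-/

open Set Metric Filter Topology

theorem LinearMap.bijective_prod_snd {R M N : Type*} [Ring R] [AddCommGroup M] [Module R M]
    [AddCommGroup N] [Module R N] (D : M × R →ₗ[R] N)
    (hD : Function.Bijective fun v => D (v, 0)) :
    Function.Bijective (D.prod (LinearMap.snd R M R)) := by
  constructor
  · rw [← LinearMap.ker_eq_bot, LinearMap.ker_eq_bot']
    rintro ⟨v, τ⟩ h
    obtain ⟨hv, rfl : τ = 0⟩ := Prod.mk_eq_zero.mp h
    obtain rfl : v = 0 := hD.1 (show D (v, 0) = D (0, 0) by rw [hv, Prod.mk_zero_zero, map_zero])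
    rfl
  · rintro ⟨w, τ⟩
    obtain ⟨v, hv : D (v, 0) = w - D (0, τ)⟩ := hD.2 (w - D (0, τ))
    refine ⟨(v, τ), Prod.ext ?_ rfl⟩
    change D (v, τ) = w
    rw [show (v, τ) = (v, 0) + (0, τ) by simp, map_add, hv, sub_add_cancel]

structure IsLocalZeroBranch {E F : Type*} [PseudoMetricSpace E] [Zero F]
    (H : E × ℝ → F) (φ : ℝ → E) (p : E × ℝ) (r : ℝ) : Prop where
  continuousOn : ContinuousOn φ (ball p.2 r)
  apply_eq_zero : ∀ s ∈ ball p.2 r, H (φ s, s) = 0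
  eq_of_apply_eq_zero : ∀ q ∈ ball p r, H q = 0 → q.1 = φ q.2

theorem IsLocalZeroBranch.mono {E F : Type*} [PseudoMetricSpace E] [Zero F] {H : E × ℝ → F}
    {φ : ℝ → E} {p q : E × ℝ} {r δ : ℝ}
    (hφ : IsLocalZeroBranch H φ p r) (hδ : 0 < δ) (hqp : ball q δ ⊆ ball p r) :
    IsLocalZeroBranch H φ q δ := by
  have hsub : ball q.2 δ ⊆ ball p.2 r := by
    intro s hs
    have h := hqp <| show (q.1, s) ∈ ball q δ by
      rw [← ball_prod_same]; exact ⟨mem_ball_self hδ, hs⟩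
    rw [← ball_prod_same] at h
    exact h.2
  exact ⟨hφ.continuousOn.mono hsub, fun s hs => hφ.apply_eq_zero s (hsub hs),
    fun q' hq' => hφ.eq_of_apply_eq_zero q' (hqp hq')⟩

section

variable {E F : Type*} [NormedAddCommGroup E] [NormedSpace ℝ E] [CompleteSpace E]
  [NormedAddCommGroup F] [NormedSpace ℝ F] [CompleteSpace F]

theorem exists_hasFDerivAt_prodMk_snd_equiv {H : E × ℝ → F} {p : E × ℝ}
    (hH : DifferentiableAt ℝ H p) (hreg : Function.Bijective fun v => fderiv ℝ H p (v, 0)) :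
    ∃ e : (E × ℝ) ≃L[ℝ] (F × ℝ),
      HasFDerivAt (fun q => (H q, q.2)) (e : E × ℝ →L[ℝ] F × ℝ) p := by
  set D := (fderiv ℝ H p).prod (ContinuousLinearMap.snd ℝ E ℝ)
  have hD : Function.Bijective D :=
    LinearMap.bijective_prod_snd (fderiv ℝ H p : E × ℝ →ₗ[ℝ] F) hreg
  refine ⟨.ofBijective D (LinearMap.ker_eq_bot.mpr hD.1) (LinearMap.range_eq_top.mpr hD.2), ?_⟩
  rw [ContinuousLinearEquiv.coe_ofBijective]
  exact hH.hasFDerivAt.prodMk hasFDerivAt_snd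

theorem exists_isLocalZeroBranch {H : E × ℝ → F} {p : E × ℝ} {n : WithTop ℕ∞}
    (hH : ContDiffAt ℝ n H p) (hn : n ≠ 0) (hp : H p = 0)
    (hreg : Function.Bijective fun v => fderiv ℝ H p (v, 0)) :
    ∃ r > 0, ∃ φ : ℝ → E, IsLocalZeroBranch H φ p r ∧ ContDiffAt ℝ n φ p.2 := by
  set G : E × ℝ → F × ℝ := fun q => (H q, q.2)
  have hG : ContDiffAt ℝ n G p := hH.prodMk contDiffAt_snd
  obtain ⟨e, hG'⟩ := exists_hasFDerivAt_prodMk_snd_equiv (hH.differentiableAt hn) hreg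
  set Φ := hG.toOpenPartialHomeomorph G hG' hn
  have hGp : G p = (0, p.2) := by simp [G, hp]
  have hnhds : {q : E × ℝ | q ∈ Φ.source ∧ ((0 : F), q.2) ∈ Φ.target} ∈ 𝓝 p := by
    refine inter_mem (Φ.open_source.mem_nhds (hG.mem_toOpenPartialHomeomorph_source hG' hn)) ?_
    refine (continuous_const.prodMk continuous_snd).continuousAt.preimage_mem_nhds
      (Φ.open_target.mem_nhds ?_)
    simpa [hGp] using hG.image_mem_toOpenPartialHomeomorph_target hG' hn
  obtain ⟨r, hr, hball⟩ := Metric.mem_nhds_iff.mp hnhds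
  set φ : ℝ → E := fun s => (Φ.symm (0, s)).1
  have hmaps : ∀ s ∈ ball p.2 r, ((0 : F), s) ∈ Φ.target := fun s hs =>
    (hball <| show (p.1, s) ∈ ball p r by
      rw [← ball_prod_same]; exact ⟨mem_ball_self hr, hs⟩).2
  have hsymm : ∀ s ∈ ball p.2 r, Φ.symm (0, s) = (φ s, s) := fun s hs =>
    have h : (Φ (Φ.symm (0, s))).2 = s := congrArg Prod.snd (Φ.right_inv (hmaps s hs))
    Prod.ext rfl h
  refine ⟨r, hr, φ, ⟨?_, fun s hs => ?_, fun q hq hq0 => ?_⟩, ?_⟩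
  · exact continuous_fst.comp_continuousOn
      (Φ.continuousOn_symm.comp (continuous_const.prodMk continuous_id).continuousOn hmaps)
  · have h := congrArg Prod.fst (Φ.right_inv (hmaps s hs))
    rwa [hsymm s hs] at h
  · have h := Φ.left_inv (hball hq).1
    rw [show Φ q = (0, q.2) from Prod.ext hq0 rfl, hsymm q.2 ?_] at h
    · exact (congrArg Prod.fst h).symm
    · rw [← ball_prod_same] at hq
      exact hq.2
  · have hinv := hG.to_localInverse hG' hn
    rw [hGp] at hinv
    exact contDiffAt_fst.comp _ (hinv.comp _ (contDiffAt_const.prodMk contDiffAt_id))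

theorem ContinuousAt.contDiffAt_of_eventually_apply_eq_zero {H : E × ℝ → F} {x : ℝ → E}
    {s : ℝ} {n : WithTop ℕ∞} (hx : ContinuousAt x s) (hH : ContDiffAt ℝ n H (x s, s))
    (hn : n ≠ 0) (hreg : Function.Bijective fun v => fderiv ℝ H (x s, s) (v, 0))
    (hzero : ∀ᶠ σ in 𝓝 s, H (x σ, σ) = 0) : ContDiffAt ℝ n x s := by
  obtain ⟨r, hr, φ, hφ, hφs⟩ := exists_isLocalZeroBranch hH hn hzero.self_of_nhds hreg
  have hgraph : Tendsto (fun σ => (x σ, σ)) (𝓝 s) (𝓝 (x s, s)) := hx.prodMk continuousAt_id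
  refine hφs.congr_of_eventuallyEq ?_
  filter_upwards [hzero, hgraph (ball_mem_nhds _ hr)] with σ hσ0 hσ
  exact hφ.eq_of_apply_eq_zero _ hσ hσ0

theorem IsCompact.exists_uniform_isLocalZeroBranch {H : E × ℝ → F} {S : Set (E × ℝ)}
    (hS : IsCompact S) (hH : ∀ p ∈ S, ContDiffAt ℝ 1 H p) (hzero : ∀ p ∈ S, H p = 0)
    (hreg : ∀ p ∈ S, Function.Bijective fun v => fderiv ℝ H p (v, 0)) :
    ∃ δ > 0, ∀ p ∈ S, ∃ φ : ℝ → E, IsLocalZeroBranch H φ p δ := by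
  choose r hr φ hφ _ using fun p : S =>
    exists_isLocalZeroBranch (hH p p.2) one_ne_zero (hzero p p.2) (hreg p p.2)
  obtain ⟨δ, hδ, hleb⟩ :=
    lebesgue_number_lemma_of_metric (c := fun p : S => ball p.1 (r p)) hS (fun _ => isOpen_ball)
    (fun p hp => mem_iUnion.mpr ⟨⟨p, hp⟩, mem_ball_self (hr ⟨p, hp⟩)⟩)
  refine ⟨δ, hδ, fun q hq => ?_⟩
  obtain ⟨p, hqp⟩ := hleb q hq
  exact ⟨φ p, (hφ p).mono hδ hqp⟩

end

structure IsZeroCurve {E F : Type*} [TopologicalSpace E] [Zero F]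
    (H : E × ℝ → F) (x₀ : E) (T : ℝ) (x : ℝ → E) : Prop where
  continuousOn : ContinuousOn x (Icc 0 T)
  apply_zero : x 0 = x₀
  apply_eq_zero : ∀ s ∈ Icc 0 T, H (x s, s) = 0

namespace IsZeroCurve

variable {E F : Type*} [Zero F] {H : E × ℝ → F} {x₀ : E} {T : ℝ} {x : ℝ → E}

theorem mono [TopologicalSpace E] {T' : ℝ} (hx : IsZeroCurve H x₀ T x) (hT' : T' ≤ T) :
    IsZeroCurve H x₀ T' x :=
  ⟨hx.continuousOn.mono (Icc_subset_Icc_right hT'), hx.apply_zero,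
    fun s hs => hx.apply_eq_zero s ⟨hs.1, hs.2.trans hT'⟩⟩

theorem extend [PseudoMetricSpace E] {φ : ℝ → E} {r T' : ℝ} (hx : IsZeroCurve H x₀ T x)
    (hT : 0 ≤ T) (hφ : IsLocalZeroBranch H φ (x T, T) r) (hTT' : T ≤ T') (hT' : T' < T + r) :
    IsZeroCurve H x₀ T' (fun s => if s ≤ T then x s else φ s) := by
  set y : ℝ → E := fun s => if s ≤ T then x s else φ s
  have hr : 0 < r := by linarith
  have hxT : x T = φ T :=
    hφ.eq_of_apply_eq_zero _ (mem_ball_self hr) (hx.apply_eq_zero T ⟨hT, le_rfl⟩)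
  have hball : Icc T T' ⊆ ball T r := fun s hs => by
    rw [Real.ball_eq_Ioo]; constructor <;> linarith [hs.1, hs.2]
  have heq_x : EqOn y x (Icc 0 T) := fun s hs => if_pos hs.2
  have heq_φ : EqOn y φ (Icc T T') := fun s hs => by
    rcases hs.1.eq_or_lt with rfl | hlt
    · exact (if_pos le_rfl).trans hxT
    · exact if_neg hlt.not_ge
  refine ⟨?_, (if_pos hT).trans hx.apply_zero, fun s hs => ?_⟩
  · rw [← Icc_union_Icc_eq_Icc hT hTT']
    exact (hx.continuousOn.congr heq_x).union_of_isClosed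
      ((hφ.continuousOn.mono hball).congr heq_φ) isClosed_Icc isClosed_Icc
  · rcases le_total s T with hsT | hTs
    · rw [heq_x ⟨hs.1, hsT⟩]; exact hx.apply_eq_zero s ⟨hs.1, hsT⟩
    · rw [heq_φ ⟨hTs, hs.2⟩]; exact hφ.apply_eq_zero s (hball ⟨hTs, hs.2⟩)

end IsZeroCurve

theorem exists_isZeroCurve_one {E F : Type*} [PseudoMetricSpace E] [Zero F] {H : E × ℝ → F}
    {x₀ : E} {δ : ℝ} (hδ : 0 < δ) (h0 : H (x₀, 0) = 0)
    (hbranch : ∀ p : E × ℝ, p.2 ∈ Icc 0 1 → H p = 0 →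
      ∃ φ, IsLocalZeroBranch H φ p δ) :
    ∃ x, IsZeroCurve H x₀ 1 x := by
  have hstep : ∀ k : ℕ, ∃ x, IsZeroCurve H x₀ (min 1 (k * (δ / 2))) x := by
    intro k
    induction k with
    | zero =>
      refine ⟨fun _ => x₀, continuousOn_const, rfl, fun s hs => ?_⟩
      obtain rfl : s = 0 := le_antisymm (by simpa using hs.2) hs.1
      exact h0
    | succ k ih =>
      obtain ⟨x, hx⟩ := ih
      set T := min 1 (k * (δ / 2))
      have hT : T ∈ Icc 0 1 := ⟨le_min zero_le_one (by positivity), min_le_left _ _⟩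
      obtain ⟨φ, hφ⟩ := hbranch (x T, T) hT (hx.apply_eq_zero T ⟨hT.1, le_rfl⟩)
      refine ⟨_, hx.extend hT.1 hφ ?_ ?_⟩
      · push_cast; exact min_le_min le_rfl (by linarith)
      · push_cast; simp only [T, min_def]; split_ifs <;> linarith
  obtain ⟨k, hk⟩ := exists_nat_ge (2 / δ)
  obtain ⟨x, hx⟩ := hstep k
  refine ⟨x, hx.mono (le_min le_rfl ?_)⟩
  rw [div_le_iff₀ hδ] at hk
  linarith

theorem homotopy_zero_curve_reaches_target_general
    (n : ℕ)
    (H : (Fin n → ℝ) × ℝ → Fin n → ℝ) (hH : ContDiff ℝ 1 H)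
    (x₀ : Fin n → ℝ) (h0 : H (x₀, 0) = 0)
    (hreg : ∀ x : Fin n → ℝ, ∀ t ∈ Set.Icc (0 : ℝ) 1, H (x, t) = 0 →
      Function.Bijective (fun v : Fin n → ℝ => fderiv ℝ H (x, t) (v, 0)))
    (K : Set (Fin n → ℝ)) (hK : IsCompact K)
    (hbdd : ∀ x : Fin n → ℝ, ∀ t ∈ Set.Icc (0 : ℝ) 1, H (x, t) = 0 → x ∈ K) :
    ∃ x : ℝ → Fin n → ℝ,
      ContinuousOn x (Set.Icc 0 1) ∧
      ContDiffOn ℝ 1 x (Set.Ioo 0 1) ∧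
      x 0 = x₀ ∧
      (∀ t ∈ Set.Icc (0 : ℝ) 1, H (x t, t) = 0) := by
  set S := Prod.snd ⁻¹' Icc (0 : ℝ) 1 ∩ H ⁻¹' {0}
  have hS : IsCompact S :=
    (hK.prod isCompact_Icc).of_isClosed_subset
      ((isClosed_Icc.preimage continuous_snd).inter (isClosed_singleton.preimage hH.continuous))
      fun p hp => ⟨hbdd p.1 p.2 hp.1 hp.2, hp.1⟩
  obtain ⟨δ, hδ, hbranch⟩ := hS.exists_uniform_isLocalZeroBranch (fun p _ => hH.contDiffAt)
    (fun p hp => hp.2) (fun p hp => hreg p.1 p.2 hp.1 hp.2)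
  obtain ⟨x, hx⟩ := exists_isZeroCurve_one hδ h0 fun p hp hp0 => hbranch p ⟨hp, hp0⟩
  refine ⟨x, hx.continuousOn, fun s hs => ?_, hx.apply_zero, hx.apply_eq_zero⟩
  have hnhds : Icc 0 1 ∈ 𝓝 s := Icc_mem_nhds hs.1 hs.2
  have hzero : H (x s, s) = 0 := hx.apply_eq_zero s (Ioo_subset_Icc_self hs)
  exact ((hx.continuousOn.continuousAt hnhds).contDiffAt_of_eventually_apply_eq_zero
    hH.contDiffAt one_ne_zero (hreg _ _ (Ioo_subset_Icc_self hs) hzero)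
    (eventually_of_mem hnhds hx.apply_eq_zero)).contDiffWithinAt

/-- Global continuation: if `H(x₀,0) = 0`, the partial Jacobian `H_x` is
invertible at every zero of `H(·,t)` for `t ∈ [0,1]`, and all zeros are confined to a
compact set, then there is a zero curve `x : [0,1] → ℝⁿ`, continuous on `[0,1]` and
`C¹` on `(0,1)`, with `x(0) = x₀` and `H(x(t),t) = 0` on `[0,1]`; in particular
`x(1)` is a zero of the target problem `H(·,1)`. -/
theorem homotopy_zero_curve_reaches_target
    (n : ℕ) (hn : 1 ≤ n)
    (H : (Fin n → ℝ) × ℝ → Fin n → ℝ) (hH : ContDiff ℝ 1 H)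
    (x₀ : Fin n → ℝ) (h0 : H (x₀, 0) = 0)
    (hreg : ∀ x : Fin n → ℝ, ∀ t ∈ Set.Icc (0 : ℝ) 1, H (x, t) = 0 →
      Function.Bijective (fun v : Fin n → ℝ => fderiv ℝ H (x, t) (v, 0)))
    (K : Set (Fin n → ℝ)) (hK : IsCompact K)
    (hbdd : ∀ x : Fin n → ℝ, ∀ t ∈ Set.Icc (0 : ℝ) 1, H (x, t) = 0 → x ∈ K) :
    ∃ x : ℝ → Fin n → ℝ,
      ContinuousOn x (Set.Icc 0 1) ∧
      ContDiffOn ℝ 1 x (Set.Ioo 0 1) ∧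
      x 0 = x₀ ∧
      (∀ t ∈ Set.Icc (0 : ℝ) 1, H (x t, t) = 0) :=
  homotopy_zero_curve_reaches_target_general n H hH x₀ h0 hreg K hK hbdd
end
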